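/- For every fixed pair α, β ∈ ℝ with α > β, the map ρ ↦ F(α,β;ρ) is strictly increasing on (0,1). -/
import Mathlib
set_option maxHeartbeats 1000000


/-- `x·u(x)` for interaction strength `α`: the quantity
`(α/2)x + log 2 + (1/2)x log x − (1/2)(x−2) log(x−2)`
(convention `0 log 0 = 0`, automatic since `Real.log 0 = 0`). The same formula
with `β` in place of `α` gives `y·v(y)`. -/
noncomputable def xu (α x : ℝ) : ℝ :=
  α / 2 * x + Real.log 2 + (1 / 2) * x * Real.log x - (1 / 2) * (x - 2) * Real.log (x - 2)

/-- The integrand of the variational formula for `F(α,β;ρ)`: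
`[ρ x u(x) + (1−ρ) y v(y)] / [ρ x + (1−ρ) y]`. -/
noncomputable def Fint (α β ρ x y : ℝ) : ℝ :=
  (ρ * xu α x + (1 - ρ) * xu β y) / (ρ * x + (1 - ρ) * y)

/-- `F(α,β;ρ) = sup_{x ≥ 2, y ≥ 2} [ρ x u(x) + (1−ρ) y v(y)] / [ρ x + (1−ρ) y]`. -/
noncomputable def Fsup (α β ρ : ℝ) : ℝ :=
  sSup {z : ℝ | ∃ x y : ℝ, 2 ≤ x ∧ 2 ≤ y ∧ z = Fint α β ρ x y}

lemma mul_log_ge (t : ℝ) (ht : 0 ≤ t) : t - 1 ≤ t * Real.log t := by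
  rcases eq_or_lt_of_le ht with h0 | h0
  · simp [← h0]
  · have h1 : Real.log t⁻¹ ≤ t⁻¹ - 1 := Real.log_le_sub_one_of_pos (by positivity)
    rw [Real.log_inv] at h1
    have := mul_le_mul_of_nonneg_left h1 (le_of_lt h0)
    have ht' : t * t⁻¹ = 1 := mul_inv_cancel₀ (ne_of_gt h0)
    nlinarith

lemma log_le_two_sqrt (x : ℝ) (hx : 0 ≤ x) : Real.log x ≤ 2 * Real.sqrt x := by
  have h1 : Real.log (Real.sqrt x) = Real.log x / 2 := Real.log_sqrt hx
  rcases eq_or_lt_of_le hx with h0 | h0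
  · simp [← h0]
  · have h2 : Real.log (Real.sqrt x) ≤ Real.sqrt x - 1 :=
      Real.log_le_sub_one_of_pos (Real.sqrt_pos.mpr h0)
    nlinarith [Real.sqrt_nonneg x]

lemma two_sqrt_sub_le (γ t : ℝ) (hγ : 0 < γ) (ht : 0 ≤ t) :
    2 * Real.sqrt t - γ * t ≤ 1 / γ := by
  have h1 : Real.sqrt t ^ 2 = t := Real.sq_sqrt ht
  set u := Real.sqrt t with hu
  rw [← h1]
  have h2 : γ * (2 * u - γ * u ^ 2) ≤ 1 := by nlinarith [sq_nonneg (γ * u - 1)]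
  have h3 : 0 < 1 / γ := one_div_pos.mpr hγ
  have h4 : γ * (1 / γ) = 1 := mul_one_div_cancel (ne_of_gt hγ)
  nlinarith

lemma ent_le (x : ℝ) (hx : 2 ≤ x) :
    (1 / 2) * x * Real.log x - (1 / 2) * (x - 2) * Real.log (x - 2) ≤ 3 + Real.log x := by
  have hx0 : (0:ℝ) < x := by linarith
  have hlog2 : (0:ℝ) ≤ Real.log x := Real.log_nonneg (by linarith)
  rcases le_or_gt x 4 with h4 | h4
  · have h1 : x - 2 - 1 ≤ (x - 2) * Real.log (x - 2) := mul_log_ge _ (by linarith)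
    have h2 : Real.log x ≤ x - 1 := Real.log_le_sub_one_of_pos hx0
    nlinarith
  · have hx2 : (0:ℝ) < x - 2 := by linarith
    have h1 : Real.log (x / (x - 2)) ≤ x / (x - 2) - 1 :=
      Real.log_le_sub_one_of_pos (by positivity)
    rw [Real.log_div (ne_of_gt hx0) (ne_of_gt hx2)] at h1
    have h4' : Real.log (x - 2) ≤ Real.log x := Real.log_le_log hx2 (by linarith)
    have h6 : x * (x / (x - 2) - 1) ≤ 4 := by
      have : x * (x / (x - 2) - 1) = 2 * x / (x - 2) := by field_simp; ring
      rw [this, div_le_iff₀ hx2]; linarith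
    nlinarith [mul_le_mul_of_nonneg_left h1 (le_of_lt hx0)]

lemma ent_ge (x : ℝ) (hx : 3 ≤ x) :
    Real.log (x - 2) ≤ (1 / 2) * x * Real.log x - (1 / 2) * (x - 2) * Real.log (x - 2) := by
  have hx2 : (0:ℝ) < x - 2 := by linarith
  have h1 : Real.log (x - 2) ≤ Real.log x := Real.log_le_log hx2 (by linarith)
  have h2 : (0:ℝ) ≤ Real.log (x - 2) := Real.log_nonneg (by linarith)
  nlinarith

lemma xu_le (γ x : ℝ) (hx : 2 ≤ x) : xu γ x ≤ γ / 2 * x + Real.log 2 + 3 + Real.log x := by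
  have := ent_le x hx; unfold xu; linarith

lemma xu_ge (γ x : ℝ) (hx : 3 ≤ x) : γ / 2 * x + Real.log 2 + Real.log (x - 2) ≤ xu γ x := by
  have := ent_ge x hx; unfold xu; linarith

lemma xu_lin (γ x : ℝ) (hx : 2 ≤ x) : xu γ x ≤ (|γ| / 2 + 3) * x := by
  have h1 := xu_le γ x hx
  have h2 : Real.log x ≤ x - 1 := Real.log_le_sub_one_of_pos (by linarith)
  have h3 : Real.log 2 ≤ 1 := by
    have := Real.log_le_sub_one_of_pos (by norm_num : (0:ℝ) < 2); linarith
  have h4 : γ ≤ |γ| := le_abs_self γ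
  nlinarith [abs_nonneg γ]

lemma xu_two (γ : ℝ) : xu γ 2 = γ + 2 * Real.log 2 := by
  unfold xu; norm_num; ring

lemma xu_diff (α β y : ℝ) : xu α y = xu β y + (α - β) / 2 * y := by
  unfold xu; ring

section aux
variable {ρ A B x y c δ η P Q γ t C1 C2 s p q : ℝ}

lemma aux1 (h0 : 0 ≤ ρ) (h1 : ρ ≤ 1) (hA : A ≤ c * x) (hB : B ≤ c * y) :
    ρ * A + (1 - ρ) * B ≤ c * (ρ * x + (1 - ρ) * y) := by nlinarith

lemma aux2 (h : ρ * A + (1 - ρ) * B ≤ c * (ρ * x + (1 - ρ) * y)) :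
    ρ * (A - c * x) + (1 - ρ) * (B - c * y) ≤ 0 := by nlinarith

lemma aux4 (e1 : ρ * (A - c * x) ≤ ρ * P) (e2 : (1 - ρ) * (B - c * y) ≤ (1 - ρ) * Q)
    (hsum : ρ * P + (1 - ρ) * Q ≤ -η) (e3 : δ * (ρ * x + (1 - ρ) * y) ≤ η) :
    ρ * A + (1 - ρ) * B ≤ (c - δ) * (ρ * x + (1 - ρ) * y) := by nlinarith

lemma aux5 (hC1 : 0 < C1) (hC2 : 0 < C2) (hγ : 0 < γ) (ht1 : 1 ≤ t)
    (ht2 : 2 * (C1 + C2) / γ ≤ t) : C1 + C2 * t ≤ γ / 2 * t ^ 2 := by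
  have h4 : γ / 2 * t * (2 * (C1 + C2) / γ) = (C1 + C2) * t := by
    field_simp
  have h5 := mul_le_mul_of_nonneg_left ht2 (by positivity : (0:ℝ) ≤ γ / 2 * t)
  rw [h4] at h5
  nlinarith

lemma aux6 {Lx Ly l2 : ℝ} (h0 : 0 ≤ ρ) (h1 : ρ ≤ 1) (hl2 : 0 ≤ l2) (hLx : 0 ≤ Lx)
    (hLy : 0 ≤ Ly)
    (p1 : ρ * A ≤ ρ * (c * x - γ * x + (l2 + 3 + Lx)))
    (p2 : (1 - ρ) * B ≤ (1 - ρ) * (c * y - γ * y + (l2 + 3 + Ly)))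
    (hE : 2 * l2 + 6 + (Lx + Ly) ≤ γ / 2 * (ρ * x + (1 - ρ) * y))
    (hδ : δ ≤ γ / 2) (hD : 0 ≤ ρ * x + (1 - ρ) * y) :
    ρ * A + (1 - ρ) * B ≤ (c - δ) * (ρ * x + (1 - ρ) * y) := by
  nlinarith [mul_nonneg (by linarith : (0:ℝ) ≤ 1 - ρ) (by linarith : 0 ≤ l2 + 3 + Lx),
    mul_nonneg h0 (by linarith : 0 ≤ l2 + 3 + Ly),
    mul_le_mul_of_nonneg_right hδ hD]

lemma aux7 {ρ2 : ℝ} (hsum : 0 ≤ ρ * P + (1 - ρ) * Q) (hgap : Q + s ≤ P)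
    (h12 : ρ < ρ2) (hs : 0 < s) : 0 < ρ2 * P + (1 - ρ2) * Q := by
  nlinarith [mul_lt_mul_of_pos_right (show ρ < ρ2 from h12) hs,
    mul_le_mul_of_nonneg_left (show s ≤ P - Q by linarith)
      (by linarith : (0:ℝ) ≤ ρ2 - ρ)]

lemma aux8 (h0 : 0 < ρ) (h1 : ρ < 1)
    (hp : P - (ρ * P + (1 - ρ) * Q) / 2 < p) (hq : Q - (ρ * P + (1 - ρ) * Q) / 2 < q)
    (hA : 0 < ρ * P + (1 - ρ) * Q) : 0 < ρ * p + (1 - ρ) * q := by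
  nlinarith [mul_lt_mul_of_pos_left hp h0,
    mul_lt_mul_of_pos_left hq (by linarith : (0:ℝ) < 1 - ρ)]

lemma aux9 (h : 0 < ρ * (A - c * x) + (1 - ρ) * (B - c * y)) :
    c * (ρ * x + (1 - ρ) * y) < ρ * A + (1 - ρ) * B := by nlinarith

lemma aux3 {a b A x0 l2 L : ℝ} (h0 : 0 < ρ) (h1 : ρ < 1) (hl2 : 0 < l2)
    (hge : a / 2 * x0 + l2 + L ≤ A) (hL : (1 - ρ) * (a - b) + 1 ≤ ρ * L) :
    a / 2 * (ρ * x0 + (1 - ρ) * 2) < ρ * A + (1 - ρ) * (b + 2 * l2) := by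
  nlinarith [mul_le_mul_of_nonneg_left hge h0.le, mul_pos h0 hl2,
    mul_pos (by linarith : (0:ℝ) < 1 - ρ) hl2]

end aux

/-- For fixed `α > β`, `ρ ↦ F(α,β;ρ)` is strictly increasing on `(0,1)`. -/
theorem stmt19 (α β : ℝ) (h : β < α) :
    StrictMonoOn (fun ρ : ℝ => Fsup α β ρ) (Set.Ioo 0 1) := by
  intro ρ1 hρ1 ρ2 hρ2 hlt
  obtain ⟨hρ1p, hρ1q⟩ := hρ1
  obtain ⟨hρ2p, hρ2q⟩ := hρ2
  simp only
  set S : ℝ → Set ℝ := fun ρ => {z : ℝ | ∃ x y : ℝ, 2 ≤ x ∧ 2 ≤ y ∧ z = Fint α β ρ x y}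
    with hSdef
  have hFs : ∀ ρ, Fsup α β ρ = sSup (S ρ) := fun _ => rfl
  have hlog2 : 0 < Real.log 2 := Real.log_pos (by norm_num)
  have hD : ∀ ρ x y : ℝ, 0 < ρ → ρ < 1 → 2 ≤ x → 2 ≤ y → 0 < ρ * x + (1 - ρ) * y := by
    intro ρ x y h0 h1 hx hy
    have e1 : ρ * 2 ≤ ρ * x := mul_le_mul_of_nonneg_left hx h0.le
    have e2 : (1 - ρ) * 2 ≤ (1 - ρ) * y := mul_le_mul_of_nonneg_left hy (by linarith)
    linarith
  have hmem : ∀ ρ x y : ℝ, 2 ≤ x → 2 ≤ y → Fint α β ρ x y ∈ S ρ :=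
    fun ρ x y hx hy => ⟨x, y, hx, hy, rfl⟩
  have hSne : ∀ ρ, (S ρ).Nonempty := fun ρ => ⟨_, hmem ρ 2 2 le_rfl le_rfl⟩
  have hxuK : ∀ γ x : ℝ, 2 ≤ x → |γ| ≤ |α| + |β| → xu γ x ≤ ((|α| + |β|) / 2 + 3) * x := by
    intro γ x hx hγab
    refine le_trans (xu_lin γ x hx) ?_
    apply mul_le_mul_of_nonneg_right _ (by linarith)
    linarith
  have hbdd : ∀ ρ : ℝ, 0 < ρ → ρ < 1 → BddAbove (S ρ) := by
    intro ρ h0 h1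
    refine ⟨(|α| + |β|) / 2 + 3, fun z hz => ?_⟩
    obtain ⟨x, y, hx, hy, rfl⟩ := hz
    rw [Fint, div_le_iff₀ (hD ρ x y h0 h1 hx hy)]
    exact aux1 h0.le h1.le
      (hxuK α x hx (by cases abs_cases β <;> linarith [abs_nonneg β]))
      (hxuK β y hy (by cases abs_cases α <;> linarith [abs_nonneg α]))
  set c1 := Fsup α β ρ1 with hc1
  clear_value c1
  have hub1 : ∀ x y : ℝ, 2 ≤ x → 2 ≤ y → Fint α β ρ1 x y ≤ c1 := fun x y hx hy => by
    rw [hc1, hFs]; exact le_csSup (hbdd ρ1 hρ1p hρ1q) (hmem ρ1 x y hx hy)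
  have hub1' : ∀ x y : ℝ, 2 ≤ x → 2 ≤ y →
      ρ1 * (xu α x - c1 * x) + (1 - ρ1) * (xu β y - c1 * y) ≤ 0 := by
    intro x y hx hy
    have hh := hub1 x y hx hy
    rw [Fint, div_le_iff₀ (hD ρ1 x y hρ1p hρ1q hx hy)] at hh
    exact aux2 hh
  -- c1 > α/2
  have hc1α : α / 2 < c1 := by
    set T := ((1 - ρ1) * (α - β) + 1) / ρ1 with hT
    have hTpos : 0 < T := by
      apply div_pos _ hρ1p
      have : 0 < (1 - ρ1) * (α - β) := mul_pos (by linarith) (by linarith)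
      linarith
    set x0 : ℝ := 3 + Real.exp T with hx0def
    have hx0 : 3 ≤ x0 := by
      have := Real.exp_pos T; rw [hx0def]; linarith
    have hlogx0 : T ≤ Real.log (x0 - 2) := by
      have he : x0 - 2 = 1 + Real.exp T := by rw [hx0def]; ring
      rw [he]
      calc T = Real.log (Real.exp T) := (Real.log_exp T).symm
        _ ≤ Real.log (1 + Real.exp T) :=
            Real.log_le_log (Real.exp_pos T) (by linarith)
    have hge : α / 2 * x0 + Real.log 2 + Real.log (x0 - 2) ≤ xu α x0 := xu_ge α x0 hx0
    have hρT : ρ1 * T = (1 - ρ1) * (α - β) + 1 := by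
      rw [hT, mul_div_cancel₀ _ (ne_of_gt hρ1p)]
    have hF : α / 2 < Fint α β ρ1 x0 2 := by
      rw [Fint, lt_div_iff₀ (hD ρ1 x0 2 hρ1p hρ1q (by linarith) le_rfl), xu_two β]
      apply aux3 hρ1p hρ1q hlog2
        (show α / 2 * x0 + Real.log 2 + Real.log (x0 - 2) ≤ xu α x0 from hge)
      have := mul_le_mul_of_nonneg_left hlogx0 hρ1p.le
      linarith
    exact lt_of_lt_of_le hF (hub1 x0 2 (by linarith) le_rfl)
  set γ := c1 - α / 2 with hγdef
  clear_value γ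
  have hγ : 0 < γ := by rw [hγdef]; linarith
  -- P and Q
  set Ps : Set ℝ := {z : ℝ | ∃ x : ℝ, 2 ≤ x ∧ z = xu α x - c1 * x} with hPs
  set Qs : Set ℝ := {z : ℝ | ∃ y : ℝ, 2 ≤ y ∧ z = xu β y - c1 * y} with hQs
  have hPne : Ps.Nonempty := ⟨_, 2, le_rfl, rfl⟩
  have hQne : Qs.Nonempty := ⟨_, 2, le_rfl, rfl⟩
  have hkey : ∀ δ x : ℝ, δ ≤ α → 2 ≤ x → xu δ x - c1 * x ≤ Real.log 2 + 3 + 1 / γ := by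
    intro δ x hδ hx
    have h1 := xu_le δ x hx
    have h2 := log_le_two_sqrt x (by linarith)
    have h3 := two_sqrt_sub_le γ x hγ (by linarith)
    have h4 : δ / 2 * x - c1 * x ≤ -(γ * x) := by
      have h5 : 0 ≤ (c1 - γ - δ / 2) * x :=
        mul_nonneg (by rw [hγdef]; linarith) (by linarith)
      have h6 : (c1 - γ - δ / 2) * x = c1 * x - γ * x - δ / 2 * x := by ring
      linarith
    linarith
  have hPbdd : BddAbove Ps := ⟨Real.log 2 + 3 + 1 / γ, fun z hz => by
    obtain ⟨x, hx, rfl⟩ := hz; exact hkey α x le_rfl hx⟩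
  have hQbdd : BddAbove Qs := ⟨Real.log 2 + 3 + 1 / γ, fun z hz => by
    obtain ⟨y, hy, rfl⟩ := hz; exact hkey β y h.le hy⟩
  set P := sSup Ps with hPdef
  set Q := sSup Qs with hQdef
  have hPmem : ∀ x : ℝ, 2 ≤ x → xu α x - c1 * x ≤ P := fun x hx =>
    le_csSup hPbdd ⟨x, hx, rfl⟩
  have hQmem : ∀ y : ℝ, 2 ≤ y → xu β y - c1 * y ≤ Q := fun y hy =>
    le_csSup hQbdd ⟨y, hy, rfl⟩
  -- ρ1 P + (1-ρ1) Q ≤ 0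
  have hQle : ∀ x : ℝ, 2 ≤ x → ρ1 * (xu α x - c1 * x) + (1 - ρ1) * Q ≤ 0 := by
    intro x hx
    have hQ2 : Q ≤ -(ρ1 * (xu α x - c1 * x)) / (1 - ρ1) := by
      apply csSup_le hQne
      rintro z ⟨y, hy, rfl⟩
      rw [le_div_iff₀ (by linarith : (0:ℝ) < 1 - ρ1)]
      have := hub1' x y hx hy; linarith
    rw [le_div_iff₀ (by linarith : (0:ℝ) < 1 - ρ1)] at hQ2
    linarith
  have hsum_le : ρ1 * P + (1 - ρ1) * Q ≤ 0 := by
    have hP2 : P ≤ -((1 - ρ1) * Q) / ρ1 := by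
      apply csSup_le hPne
      rintro z ⟨x, hx, rfl⟩
      rw [le_div_iff₀ hρ1p]
      have := hQle x hx; linarith
    rw [le_div_iff₀ hρ1p] at hP2
    linarith
  -- P ≥ Q + (α - β)
  have hPQgap : Q + (α - β) ≤ P := by
    have hQ3 : Q ≤ P - (α - β) := by
      apply csSup_le hQne
      rintro z ⟨y, hy, rfl⟩
      have h1 := hPmem y hy
      have h2 := xu_diff α β y
      have h3 : (α - β) / 2 * 2 ≤ (α - β) / 2 * y :=
        mul_le_mul_of_nonneg_left hy (by linarith)
      linarith
    linarith
  -- 0 ≤ ρ1 P + (1-ρ1) Q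
  have hsum_ge : 0 ≤ ρ1 * P + (1 - ρ1) * Q := by
    by_contra hcon
    push_neg at hcon
    set η := -(ρ1 * P + (1 - ρ1) * Q) with hηdef
    have hη : 0 < η := by rw [hηdef]; linarith
    set m := min ρ1 (1 - ρ1) with hmdef
    have hm : 0 < m := lt_min hρ1p (by linarith)
    have hm1 : m ≤ ρ1 := min_le_left _ _
    have hm2 : m ≤ 1 - ρ1 := min_le_right _ _
    set C1 : ℝ := 2 * Real.log 2 + 6 with hC1def
    set C2 : ℝ := 4 / Real.sqrt m with hC2def
    have hsm : 0 < Real.sqrt m := Real.sqrt_pos.mpr hm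
    have hC1 : 0 < C1 := by rw [hC1def]; linarith
    have hC2 : 0 < C2 := by rw [hC2def]; positivity
    set M := max 1 (2 * (C1 + C2) / γ) with hMdef
    have hM1 : (1:ℝ) ≤ M := le_max_left _ _
    have hM2 : 2 * (C1 + C2) / γ ≤ M := le_max_right _ _
    set R := M ^ 2 with hRdef
    have hR : (0:ℝ) < R := by
      rw [hRdef]; have : (0:ℝ) < M := by linarith
      positivity
    set δ := min (γ / 2) (η / R) with hδdef
    have hδ : 0 < δ := lt_min (by linarith) (div_pos hη hR)
    have hδγ : δ ≤ γ / 2 := min_le_left _ _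
    have hkey2 : ∀ x y : ℝ, 2 ≤ x → 2 ≤ y → Fint α β ρ1 x y ≤ c1 - δ := by
      intro x y hx hy
      have hDpos := hD ρ1 x y hρ1p hρ1q hx hy
      rw [Fint, div_le_iff₀ hDpos]
      rcases le_or_gt (ρ1 * x + (1 - ρ1) * y) R with hcase | hcase
      · -- small D
        have e1 := mul_le_mul_of_nonneg_left (hPmem x hx) hρ1p.le
        have e2 := mul_le_mul_of_nonneg_left (hQmem y hy)
          (by linarith : (0:ℝ) ≤ 1 - ρ1)
        have e3 : δ * (ρ1 * x + (1 - ρ1) * y) ≤ η := by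
          have e4 : δ * (ρ1 * x + (1 - ρ1) * y) ≤ (η / R) * R :=
            mul_le_mul (min_le_right _ _) hcase hDpos.le (le_of_lt (div_pos hη hR))
          rwa [div_mul_cancel₀ _ (ne_of_gt hR)] at e4
        exact aux4 e1 e2 (by linarith) e3
      · -- large D
        set D := ρ1 * x + (1 - ρ1) * y with hDdef
        have hmx : Real.sqrt x ≤ Real.sqrt D / Real.sqrt m := by
          rw [le_div_iff₀ hsm, ← Real.sqrt_mul (by linarith : (0:ℝ) ≤ x) m]
          apply Real.sqrt_le_sqrt
          have e1 : m * x ≤ ρ1 * x := mul_le_mul_of_nonneg_right hm1 (by linarith)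
          have e2 : 0 ≤ (1 - ρ1) * y := mul_nonneg (by linarith) (by linarith)
          rw [hDdef]; rw [mul_comm]; linarith
        have hmy : Real.sqrt y ≤ Real.sqrt D / Real.sqrt m := by
          rw [le_div_iff₀ hsm, ← Real.sqrt_mul (by linarith : (0:ℝ) ≤ y) m]
          apply Real.sqrt_le_sqrt
          have e1 : m * y ≤ (1 - ρ1) * y := mul_le_mul_of_nonneg_right hm2 (by linarith)
          have e2 : 0 ≤ ρ1 * x := mul_nonneg hρ1p.le (by linarith)
          rw [hDdef]; rw [mul_comm]; linarith
        have hlx := log_le_two_sqrt x (by linarith)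
        have hly := log_le_two_sqrt y (by linarith)
        have hsD : M ≤ Real.sqrt D := by
          have e1 : Real.sqrt R ≤ Real.sqrt D := Real.sqrt_le_sqrt hcase.le
          rwa [hRdef, Real.sqrt_sq (by linarith : (0:ℝ) ≤ M)] at e1
        have hDsq : Real.sqrt D ^ 2 = D := Real.sq_sqrt hDpos.le
        have hLsum : Real.log x + Real.log y ≤ C2 * Real.sqrt D := by
          have e1 : C2 * Real.sqrt D = 4 * (Real.sqrt D / Real.sqrt m) := by
            rw [hC2def]; field_simp
          rw [e1]; linarith
        have hquad : C1 + C2 * Real.sqrt D ≤ γ / 2 * D := by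
          have e1 := aux5 hC1 hC2 hγ (le_trans hM1 hsD) (le_trans hM2 hsD)
          rwa [hDsq] at e1
        have b1 := xu_le α x hx
        have b2 := xu_le β y hy
        have hlogx : 0 ≤ Real.log x := Real.log_nonneg (by linarith)
        have hlogy : 0 ≤ Real.log y := Real.log_nonneg (by linarith)
        have p1 : ρ1 * xu α x ≤
            ρ1 * (c1 * x - γ * x + (Real.log 2 + 3 + Real.log x)) := by
          apply mul_le_mul_of_nonneg_left _ hρ1p.le
          have e1 : α / 2 * x = c1 * x - γ * x := by rw [hγdef]; ring
          linarith only [b1, e1]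
        have p2 : (1 - ρ1) * xu β y ≤
            (1 - ρ1) * (c1 * y - γ * y + (Real.log 2 + 3 + Real.log y)) := by
          apply mul_le_mul_of_nonneg_left _ (by linarith : (0:ℝ) ≤ 1 - ρ1)
          have e1 : β / 2 * y ≤ α / 2 * y :=
            mul_le_mul_of_nonneg_right (by linarith) (by linarith)
          have e2 : α / 2 * y = c1 * y - γ * y := by rw [hγdef]; ring
          linarith only [b2, e1, e2]
        have hE : 2 * Real.log 2 + 6 + (Real.log x + Real.log y) ≤ γ / 2 * D := by
          have : C1 = 2 * Real.log 2 + 6 := hC1def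
          linarith
        exact aux6 hρ1p.le hρ1q.le hlog2.le hlogx hlogy p1 p2 hE hδγ hDpos.le
    have hcontra : c1 ≤ c1 - δ := by
      have h2 : sSup (S ρ1) ≤ c1 - δ := by
        apply csSup_le (hSne ρ1)
        rintro z ⟨x, y, hx, hy, rfl⟩
        exact hkey2 x y hx hy
      calc c1 = sSup (S ρ1) := by rw [hc1, hFs]
        _ ≤ c1 - δ := h2
    linarith
  -- conclusion
  have hA2 : 0 < ρ2 * P + (1 - ρ2) * Q := aux7 hsum_ge hPQgap hlt (by linarith)
  obtain ⟨px, hpxmem, hpx⟩ := exists_lt_of_lt_csSup hPne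
    (show P - (ρ2 * P + (1 - ρ2) * Q) / 2 < P by linarith)
  obtain ⟨qy, hqymem, hqy⟩ := exists_lt_of_lt_csSup hQne
    (show Q - (ρ2 * P + (1 - ρ2) * Q) / 2 < Q by linarith)
  obtain ⟨x, hx, rfl⟩ := hpxmem
  obtain ⟨y, hy, rfl⟩ := hqymem
  have hpos : 0 < ρ2 * (xu α x - c1 * x) + (1 - ρ2) * (xu β y - c1 * y) :=
    aux8 hρ2p hρ2q hpx hqy hA2
  have hF2 : c1 < Fint α β ρ2 x y := by
    rw [Fint, lt_div_iff₀ (hD ρ2 x y hρ2p hρ2q hx hy)]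
    exact aux9 hpos
  calc c1 < Fint α β ρ2 x y := hF2
    _ ≤ Fsup α β ρ2 := by
        rw [hFs]; exact le_csSup (hbdd ρ2 hρ2p hρ2q) (hmem ρ2 x y hx hy)
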